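/- Let a ∈ ℂ and let · be a commutative associative bilinear multiplication on 𝒲(a,−1) satisfying the compatibility condition 2 z·[x,y] = [z·x, y] + [x, z·y] for all x, y, z. Then there exist finitely supported families (α_t)_{t ∈ ℤ} and (β_t)_{t ∈ ℤ} of complex numbers such that L_i · L_j = Σ_t α_t L_{i+j+t} + Σ_t β_t I_{i+j+t}, L_i · I_j = Σ_t α_t I_{i+j+t}, and I_i · I_j = 0 for all i, j ∈ ℤ. Conversely, for any such families these formulas define a commutative associative multiplication satisfying the compatibility condition; in other words, the transposed Poisson structures on 𝒲(a,−1) are exactly the mutations of the extended Laurent polynomial algebra. -/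

import Mathlib

/-- The underlying space of the Lie algebra `𝒲(a,b)`, with basis
`L m = single (Sum.inl m) 1` and `I n = single (Sum.inr n) 1`. -/
abbrev Wab : Type := (ℤ ⊕ ℤ) →₀ ℂ

/-- The bracket of `𝒲(a,b)` on basis elements:
`[L m, L n] = (m-n) L (m+n)`, `[L m, I n] = -(n+a+bm) I (m+n)`, `[I m, I n] = 0`. -/
noncomputable def wabBasic (a b : ℂ) : ℤ ⊕ ℤ → ℤ ⊕ ℤ → Wab
  | Sum.inl m, Sum.inl n => (((m : ℂ) - (n : ℂ))) • Finsupp.single (Sum.inl (m + n)) (1 : ℂ)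
  | Sum.inl m, Sum.inr n => (-((n : ℂ) + a + b * (m : ℂ))) • Finsupp.single (Sum.inr (m + n)) (1 : ℂ)
  | Sum.inr m, Sum.inl n => (((m : ℂ) + a + b * (n : ℂ))) • Finsupp.single (Sum.inr (m + n)) (1 : ℂ)
  | Sum.inr _, Sum.inr _ => 0

/-- The Lie bracket of `𝒲(a,b)`, extended bilinearly from basis elements. -/
noncomputable def wabBracket (a b : ℂ) (f g : Wab) : Wab :=
  f.sum fun p c => g.sum fun q d => (c * d) • wabBasic a b p q

/-- The basis element `L m` of `𝒲(a,b)`. -/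
noncomputable def Lgen (m : ℤ) : Wab := Finsupp.single (Sum.inl m) 1

/-- The basis element `I m` of `𝒲(a,b)`. -/
noncomputable def Igen (m : ℤ) : Wab := Finsupp.single (Sum.inr m) 1

/-- The mutation product of the extended Laurent polynomial algebra determined
by finitely supported families `α, β`, on basis elements. -/
noncomputable def wabBasicMul (α β : ℤ →₀ ℂ) : ℤ ⊕ ℤ → ℤ ⊕ ℤ → Wab
  | Sum.inl i, Sum.inl j =>
      (α.sum fun t c => c • Finsupp.single (Sum.inl (i + j + t)) (1 : ℂ)) +
      (β.sum fun t c => c • Finsupp.single (Sum.inr (i + j + t)) (1 : ℂ))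
  | Sum.inl i, Sum.inr j => α.sum fun t c => c • Finsupp.single (Sum.inr (i + j + t)) (1 : ℂ)
  | Sum.inr i, Sum.inl j => α.sum fun t c => c • Finsupp.single (Sum.inr (i + j + t)) (1 : ℂ)
  | Sum.inr _, Sum.inr _ => 0

/-- The mutation product of the extended Laurent polynomial algebra determined
by `α, β`, extended bilinearly: `L_i · L_j = Σ_t α_t L_{i+j+t} + Σ_t β_t I_{i+j+t}`,
`L_i · I_j = Σ_t α_t I_{i+j+t}`, `I_i · I_j = 0`. -/
noncomputable def wabMul (α β : ℤ →₀ ℂ) (f g : Wab) : Wab :=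
  f.sum fun p c => g.sum fun q d => (c * d) • wabBasicMul α β p q


open LaurentPolynomial TrivSqZeroExt

/-!
Send `L n ↦ T n` and `I n ↦ ε T n` in the extended Laurent polynomial algebra
`𝕃 = ℂ[T;T⁻¹][ε]`, `ε² = 0`. For the derivation `D` of `𝕃` with `D (T n) = n T n` and
`D (ε T n) = (n + a) ε T n`, the bracket of `𝒲(a,-1)` becomes `[x, y] = D x * y - x * D y`
(this is where `b = -1` is needed), and for a bracket of this form the identity
`2 z [x, y] = [z x, y] + [x, z y]` follows from the Leibniz rule alone. Applied to `w z` in place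
of `z`, it shows that every mutation `x · y = w x y` is a transposed Poisson structure.

Conversely, compatibility says that every multiplication operator `m z` is a ½-derivation.
Reading the ½-derivation identity for the pairs `(L u, L v)` and `(L u, I v)` coefficientwise
shows that a ½-derivation vanishing at `L 0 = 1` vanishes, so a ½-derivation is multiplication
by its value at `L 0`. With commutativity this gives `m x y = m (L 0) (L 0) * x * y`.
-/

section Bilinear
variable {R ι κ N : Type*} [CommSemiring R] [AddCommMonoid N] [Module R N]

noncomputable def Finsupp.bilinExt (M : ι → κ → N) :
    (ι →₀ R) →ₗ[R] (κ →₀ R) →ₗ[R] N :=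
  linearCombination R fun p => linearCombination R (M p)

theorem Finsupp.bilinExt_apply (M : ι → κ → N) (f : ι →₀ R) (g : κ →₀ R) :
    bilinExt M f g = f.sum fun p c => g.sum fun q d => (c * d) • M p q := by
  simp [bilinExt, linearCombination_apply, LinearMap.finsupp_sum_apply, smul_sum, mul_smul]

theorem Finsupp.bilinExt_single (M : ι → κ → N) (p : ι) (q : κ) :
    bilinExt (R := R) M (single p 1) (single q 1) = M p q := by
  simp [bilinExt]

end Bilinear

theorem wabBracket_eq_bilinExt (a b : ℂ) (x y : Wab) :
    wabBracket a b x y = Finsupp.bilinExt (wabBasic a b) x y :=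
  (Finsupp.bilinExt_apply _ x y).symm

theorem wabMul_eq_bilinExt (α β : ℤ →₀ ℂ) (x y : Wab) :
    wabMul α β x y = Finsupp.bilinExt (wabBasicMul α β) x y :=
  (Finsupp.bilinExt_apply _ x y).symm

theorem wabBracket_Lgen_Lgen (a b : ℂ) (m n : ℤ) :
    wabBracket a b (Lgen m) (Lgen n) = ((m : ℂ) - n) • Lgen (m + n) := by
  rw [wabBracket_eq_bilinExt, Lgen, Lgen, Finsupp.bilinExt_single]
  rfl

theorem wabBracket_Lgen_Igen (a b : ℂ) (m n : ℤ) :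
    wabBracket a b (Lgen m) (Igen n) = (-((n : ℂ) + a + b * m)) • Igen (m + n) := by
  rw [wabBracket_eq_bilinExt, Lgen, Igen, Finsupp.bilinExt_single]
  rfl

section DerivBracket
variable {R A : Type*} [CommRing R] [CommRing A] [Algebra R A] (D : Derivation R A A)

def derivBracket : A →ₗ[R] A →ₗ[R] A :=
  LinearMap.mk₂ R (fun x y => D x * y - x * D y)
    (fun x x' y => by simp only [map_add]; ring)
    (fun c x y => by simp only [D.map_smul, smul_mul_assoc, smul_sub])
    (fun x y y' => by simp only [map_add]; ring)
    (fun c x y => by simp only [D.map_smul, mul_smul_comm, smul_sub])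

theorem derivBracket_apply (x y : A) : derivBracket D x y = D x * y - x * D y := rfl

theorem two_mul_mul_derivBracket (x y z : A) :
    2 * (z * derivBracket D x y) = derivBracket D (z * x) y + derivBracket D x (z * y) := by
  simp only [derivBracket_apply, Derivation.leibniz, smul_eq_mul]
  ring

theorem derivBracket_of_eq_smul_left {x : A} {c : R} (hx : D x = c • x) (y : A) :
    derivBracket D x y = x * (c • y - D y) := by
  rw [derivBracket_apply, hx, mul_sub, mul_smul_comm, smul_mul_assoc]

theorem derivBracket_of_eq_smul_right {y : A} {c : R} (hy : D y = c • y) (x : A) :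
    derivBracket D x y = y * (D x - c • x) := by
  rw [derivBracket_apply, hy, mul_sub, mul_smul_comm, mul_smul_comm, mul_comm x y,
    mul_comm (D x) y]

end DerivBracket

section LaurentPolynomial
variable {R : Type*} [CommRing R]

noncomputable def eulerOp : R[T;T⁻¹] →ₗ[R] R[T;T⁻¹] where
  toFun f := AddMonoidAlgebra.ofCoeff ((fun k : ℤ => (k : R)) • f.coeff)
  map_add' f g := by ext k; simp
  map_smul' c f := by ext k; simp; ring

theorem coeff_eulerOp (f : R[T;T⁻¹]) (k : ℤ) : (eulerOp f).coeff k = k * f.coeff k := rfl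

theorem eulerOp_single (m : ℤ) (r : R) :
    eulerOp (AddMonoidAlgebra.single m r) = AddMonoidAlgebra.single m (m * r) := by
  ext k
  rw [coeff_eulerOp, AddMonoidAlgebra.coeff_single, AddMonoidAlgebra.coeff_single,
    Finsupp.single_apply, Finsupp.single_apply]
  split_ifs with h <;> simp [h]

theorem eulerOp_T (n : ℤ) : eulerOp (T n : R[T;T⁻¹]) = (n : R) • T n := by
  rw [T, eulerOp_single, AddMonoidAlgebra.smul_single, smul_eq_mul]

theorem eulerOp_mul (f g : R[T;T⁻¹]) : eulerOp (f * g) = f * eulerOp g + g * eulerOp f := by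
  induction f using AddMonoidAlgebra.induction_linear with
  | zero => simp
  | add f f' hf hf' => rw [add_mul, map_add, hf, hf', map_add]; ring
  | single m r =>
    induction g using AddMonoidAlgebra.induction_linear with
    | zero => simp
    | add g g' hg hg' => rw [mul_add, map_add, hg, hg', map_add]; ring
    | single n s =>
      simp only [AddMonoidAlgebra.single_mul_single, eulerOp_single, add_comm n m,
        ← AddMonoidAlgebra.single_add]
      congr 1
      push_cast
      ring

theorem coeff_fst_inl_T_mul (n j : ℤ) (z : DualNumber R[T;T⁻¹]) :
    (inl (T n) * z).fst.coeff j = z.fst.coeff (j - n) := by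
  rw [fst_mul, fst_inl, T, AddMonoidAlgebra.coeff_single_mul_apply, one_mul, neg_add_eq_sub]

theorem coeff_snd_inl_T_mul (n j : ℤ) (z : DualNumber R[T;T⁻¹]) :
    (inl (T n) * z).snd.coeff j = z.snd.coeff (j - n) := by
  rw [DualNumber.snd_mul, fst_inl, snd_inl, zero_mul, add_zero, T,
    AddMonoidAlgebra.coeff_single_mul_apply, one_mul, neg_add_eq_sub]

theorem fst_inr_mul (m : R[T;T⁻¹]) (z : DualNumber R[T;T⁻¹]) : (inr m * z).fst = 0 := by
  rw [fst_mul, fst_inr, zero_mul]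

theorem coeff_snd_inr_T_mul (n j : ℤ) (z : DualNumber R[T;T⁻¹]) :
    (inr (T n) * z).snd.coeff j = z.fst.coeff (j - n) := by
  rw [DualNumber.snd_mul, fst_inr, snd_inr, zero_mul, zero_add, T,
    AddMonoidAlgebra.coeff_single_mul_apply, one_mul, neg_add_eq_sub]

end LaurentPolynomial

abbrev ExtLaurent := DualNumber ℂ[T;T⁻¹]

noncomputable def wabDerivation (a : ℂ) : Derivation ℂ ExtLaurent ExtLaurent :=
  Derivation.mk'
    { toFun := fun z => inl (eulerOp z.fst) + inr (eulerOp z.snd + a • z.snd)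
      map_add' := fun z w => by ext <;> simp; abel
      map_smul' := fun c z => by ext <;> simp [smul_add, smul_comm c a] }
    fun z w => by
      ext : 1
      · simp [eulerOp_mul]
      · simp only [DualNumber.snd_mul, snd_add, snd_inl, snd_inr, fst_add, fst_inl, fst_inr,
          smul_eq_mul, map_add, eulerOp_mul, LinearMap.coe_mk, AddHom.coe_mk, add_zero, zero_add,
          Algebra.smul_def]
        ring

theorem coeff_fst_wabDerivation (a : ℂ) (z : ExtLaurent) (k : ℤ) :
    (wabDerivation a z).fst.coeff k = k * z.fst.coeff k := by
  simp [wabDerivation, coeff_eulerOp]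

theorem coeff_snd_wabDerivation (a : ℂ) (z : ExtLaurent) (k : ℤ) :
    (wabDerivation a z).snd.coeff k = (k + a) * z.snd.coeff k := by
  simp [wabDerivation, coeff_eulerOp]
  ring

theorem wabDerivation_inl_T (a : ℂ) (n : ℤ) :
    wabDerivation a (inl (T n)) = (n : ℂ) • inl (T n) := by
  simp [wabDerivation, eulerOp_T]

theorem wabDerivation_inr_T (a : ℂ) (n : ℤ) :
    wabDerivation a (inr (T n)) = ((n : ℂ) + a) • inr (T n) := by
  simp [wabDerivation, eulerOp_T, add_smul]

noncomputable def toExtLaurent : Wab ≃ₗ[ℂ] ExtLaurent :=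
  (Finsupp.sumFinsuppLEquivProdFinsupp ℂ).trans
    ((AddMonoidAlgebra.coeffLinearEquiv ℂ).symm.prodCongr
      (AddMonoidAlgebra.coeffLinearEquiv ℂ).symm)

theorem coeff_fst_toExtLaurent (x : Wab) (k : ℤ) :
    (toExtLaurent x).fst.coeff k = x (Sum.inl k) := rfl

theorem coeff_snd_toExtLaurent (x : Wab) (k : ℤ) :
    (toExtLaurent x).snd.coeff k = x (Sum.inr k) := rfl

theorem toExtLaurent_Lgen (n : ℤ) : toExtLaurent (Lgen n) = inl (T n) := by
  ext k
  · rw [coeff_fst_toExtLaurent, fst_inl, T, AddMonoidAlgebra.coeff_single]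
    simp [Lgen, Finsupp.single_apply]
  · simp [coeff_snd_toExtLaurent, Lgen]

theorem toExtLaurent_Igen (n : ℤ) : toExtLaurent (Igen n) = inr (T n) := by
  ext k
  · simp [coeff_fst_toExtLaurent, Igen]
  · rw [coeff_snd_toExtLaurent, snd_inr, T, AddMonoidAlgebra.coeff_single]
    simp [Igen, Finsupp.single_apply]

theorem toExtLaurent_sum_Lgen (α : ℤ →₀ ℂ) (n : ℤ) :
    toExtLaurent (α.sum fun t c => c • Lgen (n + t)) =
      inl (AddMonoidAlgebra.ofCoeff α * T n) := by
  ext k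
  · rw [coeff_fst_toExtLaurent, fst_inl, T, AddMonoidAlgebra.coeff_mul_single_apply]
    simp only [Lgen, Finsupp.sum_apply, Finsupp.smul_apply, Finsupp.single_apply, Sum.inl.injEq,
      smul_eq_mul, mul_ite, mul_one, mul_zero, ← eq_sub_iff_add_eq', Finsupp.sum_ite_self_eq',
      sub_eq_add_neg]
  · simp [coeff_snd_toExtLaurent, Finsupp.sum_apply, Lgen]

theorem toExtLaurent_sum_Igen (α : ℤ →₀ ℂ) (n : ℤ) :
    toExtLaurent (α.sum fun t c => c • Igen (n + t)) =
      inr (AddMonoidAlgebra.ofCoeff α * T n) := by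
  ext k
  · simp [coeff_fst_toExtLaurent, Finsupp.sum_apply, Igen]
  · rw [coeff_snd_toExtLaurent, snd_inr, T, AddMonoidAlgebra.coeff_mul_single_apply]
    simp only [Igen, Finsupp.sum_apply, Finsupp.smul_apply, Finsupp.single_apply, Sum.inr.injEq,
      smul_eq_mul, mul_ite, mul_one, mul_zero, ← eq_sub_iff_add_eq', Finsupp.sum_ite_self_eq',
      sub_eq_add_neg]

theorem toExtLaurent_wabBracket (a : ℂ) (x y : Wab) :
    toExtLaurent (wabBracket a (-1) x y) =
      derivBracket (wabDerivation a) (toExtLaurent x) (toExtLaurent y) := by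
  have key : (Finsupp.bilinExt (wabBasic a (-1))).compr₂ toExtLaurent.toLinearMap =
      (derivBracket (wabDerivation a)).compl₁₂ toExtLaurent.toLinearMap
        toExtLaurent.toLinearMap := by
    refine LinearMap.ext_basis Finsupp.basisSingleOne Finsupp.basisSingleOne fun p q => ?_
    rcases p with m | m <;> rcases q with n | n <;>
      simp only [Finsupp.coe_basisSingleOne, LinearMap.compr₂_apply, LinearMap.compl₁₂_apply,
        LinearEquiv.coe_coe, Finsupp.bilinExt_single] <;>
      simp only [wabBasic, ← Lgen.eq_1, ← Igen.eq_1, map_smul, map_zero, toExtLaurent_Lgen,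
        toExtLaurent_Igen, derivBracket_apply, wabDerivation_inl_T, wabDerivation_inr_T,
        smul_mul_assoc, mul_smul_comm, inl_mul_inl, inl_mul_inr, inr_mul_inl, inr_mul_inr,
        smul_eq_mul, op_smul_eq_mul, ← T_add, smul_zero, sub_zero] <;>
      module
  rw [wabBracket_eq_bilinExt]
  exact LinearMap.congr_fun₂ key x y

noncomputable def mutationUnit (α β : ℤ →₀ ℂ) : ExtLaurent :=
  inl (AddMonoidAlgebra.ofCoeff α) + inr (AddMonoidAlgebra.ofCoeff β)

theorem toExtLaurent_wabMul (α β : ℤ →₀ ℂ) (x y : Wab) :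
    toExtLaurent (wabMul α β x y) = mutationUnit α β * toExtLaurent x * toExtLaurent y := by
  have key : (Finsupp.bilinExt (wabBasicMul α β)).compr₂ toExtLaurent.toLinearMap =
      (LinearMap.mul ℂ ExtLaurent).compl₁₂
        (LinearMap.mulLeft ℂ (mutationUnit α β) ∘ₗ toExtLaurent.toLinearMap)
        toExtLaurent.toLinearMap := by
    refine LinearMap.ext_basis Finsupp.basisSingleOne Finsupp.basisSingleOne fun p q => ?_
    rcases p with i | i <;> rcases q with j | j <;>
      simp only [Finsupp.coe_basisSingleOne, LinearMap.compr₂_apply, LinearMap.compl₁₂_apply,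
        LinearEquiv.coe_coe, LinearMap.comp_apply, Finsupp.bilinExt_single] <;>
      simp only [wabBasicMul, ← Lgen.eq_1, ← Igen.eq_1, map_add, map_zero,
        LinearMap.add_apply, LinearMap.mulLeft_apply, LinearMap.mul_apply', toExtLaurent_Lgen,
        toExtLaurent_Igen, toExtLaurent_sum_Lgen, toExtLaurent_sum_Igen, mutationUnit, add_mul,
        inl_mul_inl, inl_mul_inr, inr_mul_inl, inr_mul_inr, smul_eq_mul, op_smul_eq_mul,
        mul_assoc, T_add, add_zero]
  rw [wabMul_eq_bilinExt]
  exact LinearMap.congr_fun₂ key x y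

theorem exists_add_eq_of_ne_zero_of_ne (n : ℤ) :
    ∃ u v : ℤ, u + v = n ∧ u ≠ 0 ∧ v ≠ 0 ∧ u ≠ v := by
  by_cases hn : n = -1 ∨ n = -2
  · exact ⟨1, n - 1, by omega, by omega, by omega, by omega⟩
  · exact ⟨-1, n + 1, by omega, by omega, by omega, by omega⟩

theorem eq_zero_of_relation_LL (c : ℂ) {X : ℤ → ℤ → ℂ} (h0 : ∀ j, X 0 j = 0)
    (h : ∀ u v j : ℤ, 2 * ((u : ℂ) - v) * X (u + v) j =
      ((j : ℂ) - 2 * v + c) * X u (j - v) - ((j : ℂ) - 2 * u + c) * X v (j - u))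
    (n j : ℤ) : X n j = 0 := by
  have off_diag : ∀ v j : ℤ, (j : ℂ) + c - 2 * v ≠ 0 → X v j = 0 := fun v j hne => by
    have h0vj := h 0 v j
    rw [zero_add, sub_zero, h0, mul_zero, zero_sub] at h0vj
    push_cast at h0vj
    exact (mul_eq_zero.mp (by linear_combination h0vj)).resolve_left hne
  by_cases hj : (j : ℂ) + c - 2 * n = 0
  · -- both terms on the right of `h u v j` are then off the diagonal `j + c = 2 n`
    obtain ⟨u, v, rfl, hu, hv, huv⟩ := exists_add_eq_of_ne_zero_of_ne n
    push_cast at hj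
    have hXu : X u (j - v) = 0 := off_diag u (j - v) <| by
      rw [show ((j - v : ℤ) : ℂ) + c - 2 * u = v by push_cast; linear_combination hj]
      exact_mod_cast hv
    have hXv : X v (j - u) = 0 := off_diag v (j - u) <| by
      rw [show ((j - u : ℤ) : ℂ) + c - 2 * v = u by push_cast; linear_combination hj]
      exact_mod_cast hu
    have huvj := h u v j
    rw [hXu, hXv, mul_zero, mul_zero, sub_zero] at huvj
    refine (mul_eq_zero.mp huvj).resolve_left (mul_ne_zero two_ne_zero (sub_ne_zero.mpr ?_))
    exact_mod_cast huv
  · exact off_diag n j hj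

theorem eq_zero_of_relation_LI (a c : ℂ) {X : ℤ → ℤ → ℂ}
    (h : ∀ u v j : ℤ, 2 * ((v : ℂ) + a - u) * X (u + v) j = ((j : ℂ) - 2 * u + c) * X v (j - u))
    (n j : ℤ) : X n j = 0 := by
  have off_diag : ∀ v j : ℤ, (j : ℂ) + c - 2 * v - 2 * a ≠ 0 → X v j = 0 := fun v j hne => by
    have h0vj := h 0 v j
    rw [zero_add, sub_zero] at h0vj
    push_cast at h0vj
    exact (mul_eq_zero.mp (by linear_combination -h0vj)).resolve_left hne
  by_cases hj : (j : ℂ) + c - 2 * n - 2 * a = 0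
  · obtain ⟨u, hu, hnu⟩ : ∃ u : ℤ, u ≠ 0 ∧ (n : ℂ) + a - 2 * u ≠ 0 := by
      by_cases h1 : (n : ℂ) + a - 2 * (1 : ℤ) = 0
      · refine ⟨2, two_ne_zero, fun h2 => two_ne_zero (?_ : (2 : ℂ) = 0)⟩
        push_cast at h1 h2
        linear_combination h1 - h2
      · exact ⟨1, one_ne_zero, h1⟩
    have hX : X (n - u) (j - u) = 0 := off_diag (n - u) (j - u) <| by
      rw [show ((j - u : ℤ) : ℂ) + c - 2 * ((n - u : ℤ) : ℂ) - 2 * a = u by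
        push_cast; linear_combination hj]
      exact_mod_cast hu
    have huj := h u (n - u) j
    rw [add_sub_cancel, hX, mul_zero] at huj
    refine (mul_eq_zero.mp huj).resolve_left (mul_ne_zero two_ne_zero ?_)
    push_cast
    convert hnu using 1
    ring
  · exact off_diag n j hj

def IsHalfDerivation (a b : ℂ) (φ : Wab →ₗ[ℂ] Wab) : Prop :=
  ∀ x y, (2 : ℂ) • φ (wabBracket a b x y) = wabBracket a b (φ x) y + wabBracket a b x (φ y)

section HalfDerivation
variable {a : ℂ} {φ ψ : Wab →ₗ[ℂ] Wab}

theorem IsHalfDerivation.sub {b : ℂ} (hφ : IsHalfDerivation a b φ)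
    (hψ : IsHalfDerivation a b ψ) : IsHalfDerivation a b (φ - ψ) := fun x y => by
  have hφxy := hφ x y
  have hψxy := hψ x y
  simp only [wabBracket_eq_bilinExt] at hφxy hψxy ⊢
  simp only [LinearMap.sub_apply, map_sub, smul_sub, hφxy, hψxy]
  abel

theorem isHalfDerivation_conj_mulLeft (a : ℂ) (w : ExtLaurent) :
    IsHalfDerivation a (-1) (toExtLaurent.symm.conj (LinearMap.mulLeft ℂ w)) := fun x y => by
  apply toExtLaurent.injective
  simp only [LinearEquiv.conj_apply, LinearMap.comp_apply, LinearEquiv.coe_coe,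
    LinearEquiv.symm_symm, LinearMap.mulLeft_apply, map_add, toExtLaurent_wabBracket,
    LinearEquiv.apply_symm_apply, two_smul, ← two_mul]
  exact two_mul_mul_derivBracket _ _ _ _

theorem IsHalfDerivation.coeff_inl_LL (hψ : IsHalfDerivation a (-1) ψ) (u v j : ℤ) :
    2 * ((u : ℂ) - v) * ψ (Lgen (u + v)) (Sum.inl j) =
      ((j : ℂ) - 2 * v) * ψ (Lgen u) (Sum.inl (j - v)) -
        ((j : ℂ) - 2 * u) * ψ (Lgen v) (Sum.inl (j - u)) := by
  have h := congrArg (fun z => (toExtLaurent z).fst.coeff j) (hψ (Lgen u) (Lgen v))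
  simp only [wabBracket_Lgen_Lgen, map_smul, map_add, toExtLaurent_wabBracket,
    toExtLaurent_Lgen, derivBracket_of_eq_smul_right _ (wabDerivation_inl_T a v),
    derivBracket_of_eq_smul_left _ (wabDerivation_inl_T a u), fst_add, fst_smul, fst_sub,
    AddMonoidAlgebra.coeff_add, AddMonoidAlgebra.coeff_smul, AddMonoidAlgebra.coeff_sub,
    Finsupp.add_apply, Finsupp.smul_apply, Finsupp.sub_apply, coeff_fst_inl_T_mul,
    coeff_fst_wabDerivation, coeff_fst_toExtLaurent, smul_eq_mul] at h
  push_cast at h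
  linear_combination h

theorem IsHalfDerivation.coeff_inr_LL (hψ : IsHalfDerivation a (-1) ψ) (u v j : ℤ) :
    2 * ((u : ℂ) - v) * ψ (Lgen (u + v)) (Sum.inr j) =
      ((j : ℂ) - 2 * v + a) * ψ (Lgen u) (Sum.inr (j - v)) -
        ((j : ℂ) - 2 * u + a) * ψ (Lgen v) (Sum.inr (j - u)) := by
  have h := congrArg (fun z => (toExtLaurent z).snd.coeff j) (hψ (Lgen u) (Lgen v))
  simp only [wabBracket_Lgen_Lgen, map_smul, map_add, toExtLaurent_wabBracket,
    toExtLaurent_Lgen, derivBracket_of_eq_smul_right _ (wabDerivation_inl_T a v),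
    derivBracket_of_eq_smul_left _ (wabDerivation_inl_T a u), snd_add, snd_smul, snd_sub,
    AddMonoidAlgebra.coeff_add, AddMonoidAlgebra.coeff_smul, AddMonoidAlgebra.coeff_sub,
    Finsupp.add_apply, Finsupp.smul_apply, Finsupp.sub_apply, coeff_snd_inl_T_mul,
    coeff_snd_wabDerivation, coeff_snd_toExtLaurent, smul_eq_mul] at h
  push_cast at h
  linear_combination h

theorem IsHalfDerivation.coeff_inl_LI (hψ : IsHalfDerivation a (-1) ψ) (u v j : ℤ) :
    2 * ((v : ℂ) + a - u) * ψ (Igen (u + v)) (Sum.inl j) =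
      ((j : ℂ) - 2 * u) * ψ (Igen v) (Sum.inl (j - u)) := by
  have h := congrArg (fun z => (toExtLaurent z).fst.coeff j) (hψ (Lgen u) (Igen v))
  simp only [wabBracket_Lgen_Igen, map_smul, map_add, toExtLaurent_wabBracket,
    toExtLaurent_Lgen, toExtLaurent_Igen,
    derivBracket_of_eq_smul_right _ (wabDerivation_inr_T a v),
    derivBracket_of_eq_smul_left _ (wabDerivation_inl_T a u), fst_add, fst_smul, fst_sub,
    fst_inr_mul, AddMonoidAlgebra.coeff_add, AddMonoidAlgebra.coeff_smul,
    AddMonoidAlgebra.coeff_sub, AddMonoidAlgebra.coeff_zero, Finsupp.add_apply,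
    Finsupp.smul_apply, Finsupp.sub_apply, Finsupp.zero_apply, coeff_fst_inl_T_mul,
    coeff_fst_wabDerivation, coeff_fst_toExtLaurent, smul_eq_mul] at h
  push_cast at h
  linear_combination -h

theorem IsHalfDerivation.coeff_inr_LI (hψ : IsHalfDerivation a (-1) ψ) (u v j : ℤ) :
    2 * ((v : ℂ) + a - u) * ψ (Igen (u + v)) (Sum.inr j) =
      ((j : ℂ) - 2 * u + a) * ψ (Igen v) (Sum.inr (j - u)) -
        ((j : ℂ) - 2 * v - a) * ψ (Lgen u) (Sum.inl (j - v)) := by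
  have h := congrArg (fun z => (toExtLaurent z).snd.coeff j) (hψ (Lgen u) (Igen v))
  simp only [wabBracket_Lgen_Igen, map_smul, map_add, toExtLaurent_wabBracket,
    toExtLaurent_Lgen, toExtLaurent_Igen,
    derivBracket_of_eq_smul_right _ (wabDerivation_inr_T a v),
    derivBracket_of_eq_smul_left _ (wabDerivation_inl_T a u), snd_add, snd_smul, snd_sub,
    fst_sub, fst_smul, AddMonoidAlgebra.coeff_add, AddMonoidAlgebra.coeff_smul,
    AddMonoidAlgebra.coeff_sub, Finsupp.add_apply, Finsupp.smul_apply, Finsupp.sub_apply,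
    coeff_snd_inl_T_mul, coeff_snd_inr_T_mul, coeff_fst_wabDerivation, coeff_snd_wabDerivation,
    coeff_fst_toExtLaurent, coeff_snd_toExtLaurent, smul_eq_mul] at h
  push_cast at h
  linear_combination -h

theorem IsHalfDerivation.eq_zero (hψ : IsHalfDerivation a (-1) ψ) (h0 : ψ (Lgen 0) = 0) :
    ψ = 0 := by
  have hLL : ∀ n j, ψ (Lgen n) (Sum.inl j) = 0 :=
    eq_zero_of_relation_LL 0 (fun j => by rw [h0]; rfl) fun u v j => by
      simpa only [add_zero] using hψ.coeff_inl_LL u v j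
  have hLI : ∀ n j, ψ (Lgen n) (Sum.inr j) = 0 :=
    eq_zero_of_relation_LL a (fun j => by rw [h0]; rfl) hψ.coeff_inr_LL
  have hIL : ∀ n j, ψ (Igen n) (Sum.inl j) = 0 :=
    eq_zero_of_relation_LI a 0 fun u v j => by simpa only [add_zero] using hψ.coeff_inl_LI u v j
  have hII : ∀ n j, ψ (Igen n) (Sum.inr j) = 0 :=
    eq_zero_of_relation_LI a a fun u v j => by rw [hψ.coeff_inr_LI, hLL, mul_zero, sub_zero]
  refine Finsupp.basisSingleOne.ext fun p => Finsupp.ext fun q => ?_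
  rcases p with n | n <;> rcases q with j | j
  exacts [hLL n j, hLI n j, hIL n j, hII n j]

theorem IsHalfDerivation.toExtLaurent_apply (hφ : IsHalfDerivation a (-1) φ) (x : Wab) :
    toExtLaurent (φ x) = toExtLaurent (φ (Lgen 0)) * toExtLaurent x := by
  set μ := toExtLaurent.symm.conj (LinearMap.mulLeft ℂ (toExtLaurent (φ (Lgen 0))))
  have hμ : ∀ y, toExtLaurent (μ y) = toExtLaurent (φ (Lgen 0)) * toExtLaurent y := fun y => by
    simp [μ, LinearEquiv.conj_apply]
  have h0 : (φ - μ) (Lgen 0) = 0 := by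
    apply toExtLaurent.injective
    rw [LinearMap.sub_apply, map_sub, hμ, toExtLaurent_Lgen, T_zero, inl_one, mul_one, sub_self,
      map_zero]
  have hφμ : φ = μ := sub_eq_zero.mp ((hφ.sub (isHalfDerivation_conj_mulLeft a _)).eq_zero h0)
  rw [← hμ, ← hφμ]

end HalfDerivation
/-- Every transposed Poisson multiplication on `𝒲(a,-1)` is given
on basis elements by a mutation of the extended Laurent polynomial algebra, and
conversely every such mutation gives a transposed Poisson structure on `𝒲(a,-1)`. -/
theorem transposedPoisson_on_wab_neg_one (a : ℂ) :
    (∀ m : Wab →ₗ[ℂ] Wab →ₗ[ℂ] Wab,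
      (∀ x y : Wab, m x y = m y x) →
      (∀ x y z : Wab, m (m x y) z = m x (m y z)) →
      (∀ x y z : Wab, (2 : ℂ) • m z (wabBracket a (-1) x y) =
          wabBracket a (-1) (m z x) y + wabBracket a (-1) x (m z y)) →
      ∃ α β : ℤ →₀ ℂ,
        (∀ i j : ℤ, m (Lgen i) (Lgen j) =
          (α.sum fun t c => c • Lgen (i + j + t)) +
          (β.sum fun t c => c • Igen (i + j + t))) ∧
        (∀ i j : ℤ, m (Lgen i) (Igen j) = α.sum fun t c => c • Igen (i + j + t)) ∧
        (∀ i j : ℤ, m (Igen i) (Igen j) = 0)) ∧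
    (∀ α β : ℤ →₀ ℂ,
      (∀ x y z : Wab, wabMul α β (x + y) z = wabMul α β x z + wabMul α β y z) ∧
      (∀ (c : ℂ) (x y : Wab), wabMul α β (c • x) y = c • wabMul α β x y) ∧
      (∀ x y : Wab, wabMul α β x y = wabMul α β y x) ∧
      (∀ x y z : Wab, wabMul α β (wabMul α β x y) z = wabMul α β x (wabMul α β y z)) ∧
      (∀ x y z : Wab, (2 : ℂ) • wabMul α β z (wabBracket a (-1) x y) =
          wabBracket a (-1) (wabMul α β z x) y + wabBracket a (-1) x (wabMul α β z y))) := by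
  refine ⟨fun m hcomm _ hcompat => ?_, fun α β => ?_⟩
  · have hφ : ∀ z, IsHalfDerivation a (-1) (m z) := fun z x y => hcompat x y z
    obtain ⟨α, β, hw⟩ : ∃ α β, mutationUnit α β = toExtLaurent (m (Lgen 0) (Lgen 0)) :=
      ⟨_, _, inl_fst_add_inr_snd_eq _⟩
    have hm : ∀ x y, m x y = wabMul α β x y := fun x y => toExtLaurent.injective <| by
      rw [toExtLaurent_wabMul, hw, (hφ x).toExtLaurent_apply, hcomm x, (hφ _).toExtLaurent_apply]
    refine ⟨α, β, fun i j => ?_, fun i j => ?_, fun i j => ?_⟩ <;>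
      rw [hm, wabMul_eq_bilinExt] <;> exact Finsupp.bilinExt_single _ _ _
  · refine ⟨fun x y z => ?_, fun c x y => ?_, fun x y => ?_, fun x y z => ?_, fun x y z => ?_⟩
    · simp only [wabMul_eq_bilinExt, map_add, LinearMap.add_apply]
    · simp only [wabMul_eq_bilinExt, map_smul, LinearMap.smul_apply]
    all_goals apply toExtLaurent.injective
    · simp only [toExtLaurent_wabMul]
      ring
    · simp only [toExtLaurent_wabMul]
      ring
    · simp only [map_add, toExtLaurent_wabMul, toExtLaurent_wabBracket, two_smul,
        ← two_mul]
      exact two_mul_mul_derivBracket _ _ _ _
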